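/- arXiv:2104.12251 — 3 statements merged into one kernel-verified Lean document; each statement's English description precedes it below -/
import Mathlib

section
/- Let (X,‖·‖) be a real Banach space and let S, with domain D(S) ⊆ X, generate a bounded analytic semigroup (T(t))_{t≥0} with constants M, C₀ as in the context. Then for every integer k ≥ 0 and every s ∈ (0,2) there exists a constant C = C(s,k,M,C₀) such that for all t > 0: (a) ‖tᵏSᵏ(T(t)x)‖_{Ḃˢ} ≤ C‖x‖_{Ḃˢ} for all x ∈ D(S); and (b) ‖tᵏالسᵏ(T(t)x)‖_{Ḃ⁻ˢ} ≤ C‖x‖_{Ḃ⁻ˢ} for all x in the range of S; where Sᵏ(T(t)x) is well defined because T(τ)y ∈ D(S) for all τ > 0, y ∈ X. -/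
/-!
Analyticity gives `t ‖S T(t) z‖ ≤ C₀ ‖z‖`; writing `T(t) = T(t/2) T(t/2)` and inducting on `k`
upgrades this to `tᵏ ‖Sᵏ T(t) z‖ ≤ B_k ‖z‖`. Since `T(τ)`, and `S` on the range of `T`, commute
with `Sᵏ T(t)`, the integrands defining both seminorms of `tᵏ Sᵏ T(t) x` are bounded pointwise
in `τ` by `B_k` times those of `x`.
-/

open MeasureTheory
open scoped ENNReal NNReal

noncomputable section

variable {X : Type*} [NormedAddCommGroup X] [NormedSpace ℝ X] [CompleteSpace X]

/-- `S`, a linear operator defined on the subspace `D ⊆ X`, generates the bounded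
analytic semigroup `(T(t))_{t≥0}` with constants `M, C₀`. -/
structure IsBAS (D : Set X) (S : X → X) (T : ℝ → X →L[ℝ] X) (M C₀ : ℝ) : Prop where
  zero_mem : (0 : X) ∈ D
  add_mem : ∀ x ∈ D, ∀ y ∈ D, x + y ∈ D
  smul_mem : ∀ (c : ℝ), ∀ x ∈ D, c • x ∈ D
  map_add : ∀ x ∈ D, ∀ y ∈ D, S (x + y) = S x + S y
  map_smul : ∀ (c : ℝ), ∀ x ∈ D, S (c • x) = c • S x
  T_zero : T 0 = ContinuousLinearMap.id ℝ X
  T_semigroup : ∀ t : ℝ, 0 ≤ t → ∀ s : ℝ, 0 ≤ s → T (t + s) = (T t).comp (T s)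
  T_cont : ∀ x : X, ContinuousOn (fun t : ℝ => T t x) (Set.Ici 0)
  T_bdd : ∀ t : ℝ, 0 ≤ t → ∀ x : X, ‖T t x‖ ≤ M * ‖x‖
  T_mem : ∀ x ∈ D, ∀ t : ℝ, 0 ≤ t → T t x ∈ D
  T_comm : ∀ x ∈ D, ∀ t : ℝ, 0 ≤ t → S (T t x) = T t (S x)
  T_deriv : ∀ x ∈ D, ∀ t : ℝ, 0 ≤ t →
    HasDerivWithinAt (fun τ : ℝ => T τ x) (T t (S x)) (Set.Ici 0) t
  analytic_mem : ∀ x : X, ∀ t : ℝ, 0 < t → T t x ∈ D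
  analytic_bdd : ∀ x : X, ∀ t : ℝ, 0 < t → t * ‖S (T t x)‖ ≤ C₀ * ‖x‖

/-- The (extended-real-valued) seminorm `‖x‖_{Ḃˢ} = ∫₀^∞ t^{−s/2}‖S(T(t)x)‖ dt`. -/
def BsNorm (S : X → X) (T : ℝ → X →L[ℝ] X) (s : ℝ) (x : X) : ℝ≥0∞ :=
  ∫⁻ t in Set.Ioi (0 : ℝ), ENNReal.ofReal (t ^ (-s / 2) * ‖S (T t x)‖)

/-- The (extended-real-valued) seminorm `‖x‖_{Ḃ⁻ˢ} = ∫₀^∞ t^{s/2−1}‖T(t)x‖ dt`. -/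
def BnegNorm (T : ℝ → X →L[ℝ] X) (s : ℝ) (x : X) : ℝ≥0∞ :=
  ∫⁻ t in Set.Ioi (0 : ℝ), ENNReal.ofReal (t ^ (s / 2 - 1) * ‖T t x‖)

lemma setLIntegral_ofReal_le_const_mul {α : Type*} [MeasurableSpace α] {μ : Measure α}
    {s : Set α} (hs : MeasurableSet s) {f g : α → ℝ} {c : ℝ≥0} (hfg : ∀ a ∈ s, f a ≤ c * g a) :
    ∫⁻ a in s, ENNReal.ofReal (f a) ∂μ ≤ c * ∫⁻ a in s, ENNReal.ofReal (g a) ∂μ := by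
  rw [← lintegral_const_mul' _ _ ENNReal.coe_ne_top]
  refine setLIntegral_mono_ae' hs (Filter.Eventually.of_forall fun a ha => ?_)
  rw [← ENNReal.ofReal_coe_nnreal, ← ENNReal.ofReal_mul c.coe_nonneg]
  exact ENNReal.ofReal_le_ofReal (hfg a ha)

def iterateBound (M C₀ : ℝ) : ℕ → ℝ≥0
  | 0 => M.toNNReal
  | k + 1 => 2 ^ (k + 1) * C₀.toNNReal * iterateBound M C₀ k

namespace IsBAS

variable {E : Type*} [NormedAddCommGroup E] [NormedSpace ℝ E]
  {D : Set E} {S : E → E} {T : ℝ → E →L[ℝ] E} {M C₀ : ℝ}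

lemma S_T_add (h : IsBAS D S T M C₀) {v ε : ℝ} (hv : 0 ≤ v) (hε : 0 < ε) (x : E) :
    S (T (v + ε) x) = T v (S (T ε x)) := by
  rw [h.T_semigroup v hv ε hε.le, ContinuousLinearMap.comp_apply,
    h.T_comm _ (h.analytic_mem x ε hε) v hv]

lemma S_T_eq_T_half (h : IsBAS D S T M C₀) {t : ℝ} (ht : 0 < t) (x : E) :
    S (T t x) = T (t / 2) (S (T (t / 2) x)) := by
  simpa using h.S_T_add (half_pos ht).le (half_pos ht) x

lemma T_iterate_S_T (h : IsBAS D S T M C₀) (k : ℕ) {t u : ℝ} (ht : 0 < t) (hu : 0 ≤ u)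
    (x : E) : T u (S^[k] (T t x)) = S^[k] (T (t + u) x) := by
  induction k generalizing t x with
  | zero =>
    rw [Function.iterate_zero_apply, Function.iterate_zero_apply, add_comm,
      h.T_semigroup u hu t ht.le, ContinuousLinearMap.comp_apply]
  | succ k ih =>
    have htu : S (T (t + u) x) = T (t / 2 + u) (S (T (t / 2) x)) := by
      rw [show t + u = t / 2 + u + t / 2 by ring]
      exact h.S_T_add (by positivity) (half_pos ht) x
    rw [Function.iterate_succ_apply, Function.iterate_succ_apply, h.S_T_eq_T_half ht, htu]
    exact ih (half_pos ht) _

lemma iterate_S_T_mem (h : IsBAS D S T M C₀) (k : ℕ) {t : ℝ} (ht : 0 < t) (x : E) :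
    S^[k] (T t x) ∈ D := by
  have := h.T_iterate_S_T k (half_pos ht) (half_pos ht).le x
  rw [add_halves] at this
  exact this ▸ h.analytic_mem _ _ (half_pos ht)

lemma pow_mul_norm_iterate_S_T_le (h : IsBAS D S T M C₀) (k : ℕ) {u : ℝ} (hu : 0 < u)
    (z : E) : u ^ k * ‖S^[k] (T u z)‖ ≤ iterateBound M C₀ k * ‖z‖ := by
  induction k generalizing u z with
  | zero =>
    simpa [iterateBound] using (h.T_bdd u hu.le z).trans
      (mul_le_mul_of_nonneg_right (Real.le_coe_toNNReal M) (norm_nonneg z))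
  | succ k ih =>
    set w := S (T (u / 2) z)
    have hw : u / 2 * ‖w‖ ≤ C₀.toNNReal * ‖z‖ := (h.analytic_bdd z _ (half_pos hu)).trans
      (mul_le_mul_of_nonneg_right (Real.le_coe_toNNReal C₀) (norm_nonneg z))
    have hpow : u ^ (k + 1) = 2 ^ (k + 1) * (u / 2 * (u / 2) ^ k) := by
      rw [div_pow]; field_simp; ring
    calc u ^ (k + 1) * ‖S^[k + 1] (T u z)‖
        = 2 ^ (k + 1) * (u / 2 * ((u / 2) ^ k * ‖S^[k] (T (u / 2) w)‖)) := by
          rw [Function.iterate_succ_apply, h.S_T_eq_T_half hu, hpow]; ring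
      _ ≤ 2 ^ (k + 1) * (u / 2 * (iterateBound M C₀ k * ‖w‖)) := by
          gcongr 2 ^ (k + 1) * (u / 2 * ?_); exact ih (half_pos hu) w
      _ = 2 ^ (k + 1) * iterateBound M C₀ k * (u / 2 * ‖w‖) := by ring
      _ ≤ 2 ^ (k + 1) * iterateBound M C₀ k * (C₀.toNNReal * ‖z‖) := by gcongr
      _ = iterateBound M C₀ (k + 1) * ‖z‖ := by simp only [iterateBound]; push_cast; ring

lemma norm_smul_iterate_S_T_le (h : IsBAS D S T M C₀) (k : ℕ) {t : ℝ} (ht : 0 < t) (z : E) :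
    ‖t ^ k • S^[k] (T t z)‖ ≤ iterateBound M C₀ k * ‖z‖ := by
  rw [norm_smul, Real.norm_of_nonneg (pow_nonneg ht.le k)]
  exact h.pow_mul_norm_iterate_S_T_le k ht z

lemma T_smul_iterate_S_T (h : IsBAS D S T M C₀) (k : ℕ) {t τ : ℝ} (ht : 0 < t) (hτ : 0 < τ)
    (x : E) : T τ (t ^ k • S^[k] (T t x)) = t ^ k • S^[k] (T t (T τ x)) := by
  rw [(T τ).map_smul, h.T_iterate_S_T k ht hτ.le, h.T_semigroup t ht.le τ hτ.le,
    ContinuousLinearMap.comp_apply]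

lemma S_T_smul_iterate_S_T (h : IsBAS D S T M C₀) (k : ℕ) {t τ : ℝ} (ht : 0 < t) (hτ : 0 < τ)
    (x : E) : S (T τ (t ^ k • S^[k] (T t x))) = t ^ k • S^[k] (T t (S (T τ x))) := by
  rw [(T τ).map_smul, h.T_iterate_S_T k ht hτ.le,
    h.map_smul _ _ (h.iterate_S_T_mem k (by positivity) x), ← Function.iterate_succ_apply' S k,
    Function.iterate_succ_apply, h.S_T_add ht.le hτ x]

end IsBAS

theorem uniform_bound_in_B_general (k : ℕ) (s : ℝ) (M C₀ : ℝ) :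
    ∃ C : ℝ≥0, ∀ (D : Set X) (S : X → X) (T : ℝ → X →L[ℝ] X),
      IsBAS D S T M C₀ →
      (∀ x ∈ D, ∀ t : ℝ, 0 < t →
        BsNorm S T s (t ^ k • S^[k] (T t x)) ≤ C * BsNorm S T s x) ∧
      (∀ x ∈ S '' D, ∀ t : ℝ, 0 < t →
        BnegNorm T s (t ^ k • S^[k] (T t x)) ≤ C * BnegNorm T s x) := by
  refine ⟨iterateBound M C₀ k, fun D S T h => ⟨fun x _ t ht => ?_, fun x _ t ht => ?_⟩⟩
  · refine setLIntegral_ofReal_le_const_mul measurableSet_Ioi fun τ (hτ : 0 < τ) => ?_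
    rw [h.S_T_smul_iterate_S_T k ht hτ, mul_left_comm]
    exact mul_le_mul_of_nonneg_left (h.norm_smul_iterate_S_T_le k ht _) (by positivity)
  · refine setLIntegral_ofReal_le_const_mul measurableSet_Ioi fun τ (hτ : 0 < τ) => ?_
    rw [h.T_smul_iterate_S_T k ht hτ, mul_left_comm]
    exact mul_le_mul_of_nonneg_left (h.norm_smul_iterate_S_T_le k ht _) (by positivity)

/-- Uniform boundedness of `x ↦ tᵏSᵏT(t)x` on the spaces `Ḃˢ` and `Ḃ⁻ˢ`:
for every `k ≥ 0` and `s ∈ (0,2)` there is `C = C(s,k,M,C₀)` with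
`‖tᵏSᵏ(T(t)x)‖_{Ḃˢ} ≤ C‖x‖_{Ḃˢ}` for `x ∈ D(S)` and
`‖tᵏSᵏ(T(t)x)‖_{Ḃ⁻ˢ} ≤ C‖x‖_{Ḃ⁻ˢ}` for `x` in the range of `S`. -/
theorem uniform_bound_in_B (k : ℕ) (s : ℝ) (hs0 : 0 < s) (hs2 : s < 2)
    (M C₀ : ℝ) :
    ∃ C : ℝ≥0, ∀ (D : Set X) (S : X → X) (T : ℝ → X →L[ℝ] X),
      IsBAS D S T M C₀ →
      (∀ x ∈ D, ∀ t : ℝ, 0 < t →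
        BsNorm S T s (t ^ k • S^[k] (T t x)) ≤ C * BsNorm S T s x) ∧
      (∀ x ∈ S '' D, ∀ t : ℝ, 0 < t →
        BnegNorm T s (t ^ k • S^[k] (T t x)) ≤ C * BnegNorm T s x) :=
  uniform_bound_in_B_general k s M C₀
end
end

section
/- Let (X,‖·‖) be a real Banach space and let S, with domain D(S) ⊆ X, generate a bounded analytic semigroup (T(t))_{t≥0} with constants M, C₀ as in the context. Then for every integer k ≥ 0 and every s ∈ (0,2) there exists a constant C = C(s,k,M,C₀) such that for every x ∈ D(S): ∫₀^∞ ‖τ^{k+1}S^{k+1}(T(τ)x)‖_{Ḃˢ} dτ/τ ≤ C‖x‖_{Ḃˢ}. In particular (k = 0): ∫₀^∞ ‖S(T(τ)x)‖_{Ḃˢ} dτ ≤ C‖x‖_{Ḃˢ}. -/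
/-! For `t, τ > 0` the semigroup law turns `S T(t) (S^{k+1} T(τ) x)` into `S^{k+2} T(t+τ) x`,
and applying the analytic estimate `‖S T(t) y‖ ≤ C₀ t⁻¹ ‖y‖` over `k + 1` equal time steps bounds
its norm by `(C₀ (k+2) / σ)^{k+1} ‖S T(σ/(k+2)) x‖` with `σ = t + τ`. As `τ^k ≤ σ^k`, the double
integral is dominated by `∫∫ t^{-s/2} G(t + τ) dt dτ` with `G(σ) = σ⁻¹ ‖S T(σ/(k+2)) x‖`.
Fubini in `σ` turns this into `(1 - s/2)⁻¹ ∫ σ^{1-s/2} G(σ) dσ`, which is a multiple of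
`‖x‖_{Ḃˢ}` after rescaling time by `k + 2`. -/

open MeasureTheory
open scoped ENNReal NNReal

noncomputable section

variable {X : Type*} [NormedAddCommGroup X] [NormedSpace ℝ X] [CompleteSpace X]

open Set

lemma lintegral_Ioi_comp_add_right (f : ℝ → ℝ≥0∞) (t : ℝ) :
    ∫⁻ τ in Ioi 0, f (τ + t) = ∫⁻ σ in Ioi t, f σ := by
  rw [(measurePreserving_add_right volume t).setLIntegral_comp_emb
    (measurableEmbedding_addRight t), image_add_const_Ioi, zero_add]

lemma lintegral_Ioi_eq_ofReal_mul_lintegral_Ioi_comp_mul_left {c : ℝ} (hc : 0 < c)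
    (f : ℝ → ℝ≥0∞) :
    ∫⁻ σ in Ioi 0, f σ = ENNReal.ofReal c * ∫⁻ r in Ioi 0, f (c * r) := by
  have hvol : (volume : Measure ℝ) = ENNReal.ofReal c • Measure.map (c * ·) volume := by
    simpa [abs_of_pos hc] using (Real.smul_map_volume_mul_left hc.ne').symm
  have hpre : (c * ·) ⁻¹' Ioi (0 : ℝ) = Ioi 0 := by
    ext r; simp [mul_pos_iff_of_pos_left hc]
  conv_lhs => rw [hvol]
  rw [Measure.restrict_smul, lintegral_smul_measure,
    Measure.restrict_map (measurable_const_mul c) measurableSet_Ioi,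
    (measurableEmbedding_mulLeft₀ hc.ne').lintegral_map, hpre, smul_eq_mul]

lemma lintegral_Ioo_ofReal_rpow {r σ : ℝ} (hr : -1 < r) (hσ : 0 < σ) :
    ∫⁻ t in Ioo 0 σ, ENNReal.ofReal (t ^ r) = ENNReal.ofReal (σ ^ (r + 1) / (r + 1)) := by
  have hint : IntegrableOn (fun t : ℝ => t ^ r) (Ioo 0 σ) :=
    (intervalIntegral.intervalIntegrable_rpow' hr).1.mono_set Ioo_subset_Ioc_self
  rw [← ofReal_integral_eq_lintegral_ofReal hint
    ((ae_restrict_iff' measurableSet_Ioo).2 (ae_of_all _ fun t ht => Real.rpow_nonneg ht.1.le r)),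
    ← integral_Ioc_eq_integral_Ioo, ← intervalIntegral.integral_of_le hσ.le,
    integral_rpow (Or.inl hr), Real.zero_rpow (by linarith), sub_zero]

lemma lintegral_Ioi_lintegral_Ioi_comp_add {g G : ℝ → ℝ≥0∞} (hg : Measurable g)
    (hG : Measurable G) :
    ∫⁻ τ in Ioi 0, ∫⁻ t in Ioi 0, g t * G (t + τ)
      = ∫⁻ σ in Ioi 0, (∫⁻ t in Ioo 0 σ, g t) * G σ := by
  set F : ℝ × ℝ → ℝ≥0∞ := {p | p.1 < p.2}.indicator fun p => g p.1 * G p.2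
  have hF : Measurable F := ((hg.comp measurable_fst).mul (hG.comp measurable_snd)).indicator
    (measurableSet_lt measurable_fst measurable_snd)
  calc _ = ∫⁻ t in Ioi 0, ∫⁻ τ in Ioi 0, g t * G (t + τ) :=
        lintegral_lintegral_swap ((hg.comp measurable_snd).mul
          (hG.comp (measurable_snd.add measurable_fst))).aemeasurable
    _ = ∫⁻ t in Ioi 0, ∫⁻ σ in Ioi 0, F (t, σ) := by
        refine setLIntegral_congr_fun measurableSet_Ioi fun t (ht : 0 < t) => ?_
        change _ = ∫⁻ σ in Ioi 0, (Ioi t).indicator (fun σ => g t * G σ) σ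
        rw [lintegral_indicator measurableSet_Ioi, Measure.restrict_restrict measurableSet_Ioi,
          inter_eq_self_of_subset_left (Ioi_subset_Ioi ht.le),
          ← lintegral_Ioi_comp_add_right (fun σ => g t * G σ) t]
        simp_rw [add_comm t]
    _ = ∫⁻ σ in Ioi 0, ∫⁻ t in Ioi 0, F (t, σ) := lintegral_lintegral_swap hF.aemeasurable
    _ = _ := by
        refine setLIntegral_congr_fun measurableSet_Ioi fun σ _ => ?_
        change ∫⁻ t in Ioi 0, (Iio σ).indicator (fun t => g t * G σ) t = _
        rw [lintegral_indicator measurableSet_Iio, Measure.restrict_restrict measurableSet_Iio,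
          Iio_inter_Ioi, lintegral_mul_const _ hg]

lemma lintegral_Ioi_lintegral_Ioi_rpow_mul_comp_add {r : ℝ} (hr : -1 < r) {G : ℝ → ℝ≥0∞}
    (hG : Measurable G) :
    ∫⁻ τ in Ioi 0, ∫⁻ t in Ioi 0, ENNReal.ofReal (t ^ r) * G (t + τ)
      = ∫⁻ σ in Ioi 0, ENNReal.ofReal (σ ^ (r + 1) / (r + 1)) * G σ := by
  rw [lintegral_Ioi_lintegral_Ioi_comp_add (by fun_prop) hG]
  exact setLIntegral_congr_fun measurableSet_Ioi fun σ hσ => by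
    rw [lintegral_Ioo_ofReal_rpow hr hσ]

namespace IsBAS

variable {E : Type*} [NormedAddCommGroup E] [NormedSpace ℝ E]
variable {D : Set E} {S : E → E} {T : ℝ → E →L[ℝ] E} {M C₀ : ℝ}

lemma T_add_apply (h : IsBAS D S T M C₀) {t u : ℝ} (ht : 0 ≤ t) (hu : 0 ≤ u) (x : E) :
    T (t + u) x = T t (T u x) := by
  rw [h.T_semigroup t ht u hu, ContinuousLinearMap.comp_apply]

/-- Membership in `D` is carried through the induction because `T_comm` needs it. -/
lemma iterate_S_T_mem_and_add (h : IsBAS D S T M C₀) (x : E) (m : ℕ) {u : ℝ} (hu : 0 < u) :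
    S^[m] (T u x) ∈ D ∧ ∀ t, 0 ≤ t → S^[m] (T (t + u) x) = T t (S^[m] (T u x)) := by
  induction m generalizing u with
  | zero => exact ⟨h.analytic_mem x u hu, fun t ht => h.T_add_apply ht hu.le x⟩
  | succ m ih =>
    have hadd : ∀ {u : ℝ}, 0 < u → ∀ t, 0 ≤ t →
        S^[m + 1] (T (t + u) x) = T t (S^[m + 1] (T u x)) := fun hu t ht => by
      obtain ⟨hmem, hshift⟩ := ih hu
      rw [Function.iterate_succ_apply', Function.iterate_succ_apply', hshift t ht,
        h.T_comm _ hmem t ht]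
    refine ⟨?_, hadd hu⟩
    rw [← add_halves u, hadd (half_pos hu) _ (half_pos hu).le]
    exact h.analytic_mem _ _ (half_pos hu)

lemma iterate_S_T_add (h : IsBAS D S T M C₀) (x : E) (m : ℕ) {t u : ℝ} (ht : 0 ≤ t)
    (hu : 0 < u) : S^[m] (T (t + u) x) = T t (S^[m] (T u x)) :=
  (h.iterate_S_T_mem_and_add x m hu).2 t ht

lemma norm_S_T_le (h : IsBAS D S T M C₀) {t : ℝ} (ht : 0 < t) (y : E) :
    ‖S (T t y)‖ ≤ max C₀ 0 / t * ‖y‖ := by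
  rw [div_mul_eq_mul_div, le_div_iff₀ ht, mul_comm]
  exact (h.analytic_bdd y t ht).trans (by gcongr; exact le_max_left _ _)

lemma norm_iterate_S_T_le (h : IsBAS D S T M C₀) (x : E) (m : ℕ) {t : ℝ} (ht : 0 < t) :
    ‖S^[m + 1] (T ((m + 1) * t) x)‖ ≤ (max C₀ 0 / t) ^ m * ‖S (T t x)‖ := by
  induction m with
  | zero => simp
  | succ m ih =>
    have hsplit : ((m + 1 : ℕ) + 1 : ℝ) * t = t + (m + 1) * t := by push_cast; ring
    rw [hsplit, Function.iterate_succ_apply',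
      h.iterate_S_T_add x (m + 1) ht.le (by positivity), pow_succ', mul_assoc]
    exact (h.norm_S_T_le ht _).trans (by gcongr)

lemma continuousOn_S_T (h : IsBAS D S T M C₀) (x : E) :
    ContinuousOn (fun t => S (T t x)) (Ioi 0) := by
  intro t₀ ht₀
  have hu : (0 : ℝ) < t₀ / 2 := half_pos ht₀
  have heq : (fun t => T (t - t₀ / 2) (S (T (t₀ / 2) x))) =ᶠ[nhds t₀] fun t => S (T t x) := by
    filter_upwards [Ioi_mem_nhds (half_lt_self ht₀)] with t ht
    have := h.iterate_S_T_add x 1 (sub_nonneg.2 ht.le) hu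
    rwa [sub_add_cancel, eq_comm] at this
  have hT : ContinuousAt (fun u => T u (S (T (t₀ / 2) x))) (t₀ - t₀ / 2) :=
    (h.T_cont _).continuousAt (Ici_mem_nhds (by linarith))
  have hsub : ContinuousAt (fun t : ℝ => t - t₀ / 2) t₀ := by fun_prop
  exact ((hT.comp_of_eq hsub rfl).congr heq).continuousWithinAt

lemma bsNorm_smul (h : IsBAS D S T M C₀) (s c : ℝ) (y : E) :
    BsNorm S T s (c • y) = ENNReal.ofReal |c| * BsNorm S T s y := by
  rw [BsNorm, BsNorm, ← lintegral_const_mul' _ _ ENNReal.ofReal_ne_top]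
  refine setLIntegral_congr_fun measurableSet_Ioi fun t ht => ?_
  rw [(T t).map_smul, h.map_smul c _ (h.analytic_mem y t ht), norm_smul, Real.norm_eq_abs,
    ← ENNReal.ofReal_mul (abs_nonneg c), mul_left_comm]

lemma pow_mul_norm_iterate_S_T_le_s12 (h : IsBAS D S T M C₀) (x : E) (k : ℕ) {τ σ : ℝ}
    (hτ : 0 < τ) (hτσ : τ ≤ σ) :
    τ ^ k * ‖S^[k + 2] (T σ x)‖
      ≤ ((k + 2) * max C₀ 0) ^ (k + 1) * (σ⁻¹ * ‖S (T (σ / (k + 2)) x)‖) := by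
  have hσ : 0 < σ := hτ.trans_le hτσ
  have hc : (0 : ℝ) < k + 2 := by positivity
  have hbound := h.norm_iterate_S_T_le x (k + 1) (div_pos hσ hc)
  rw [show ((k + 1 : ℕ) + 1 : ℝ) * (σ / (k + 2)) = σ by push_cast; field_simp; ring] at hbound
  calc τ ^ k * ‖S^[k + 2] (T σ x)‖
      ≤ σ ^ k * ((max C₀ 0 / (σ / (k + 2))) ^ (k + 1) * ‖S (T (σ / (k + 2)) x)‖) := by
        gcongr
    _ = ((k + 2) * max C₀ 0) ^ (k + 1) * (σ⁻¹ * ‖S (T (σ / (k + 2)) x)‖) := by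
        rw [div_div_eq_mul_div, div_pow, pow_succ σ, mul_comm (max C₀ 0)]
        field_simp

lemma lintegral_pow_mul_bsNorm_iterate_S_T_le (h : IsBAS D S T M C₀) {s : ℝ} (hs : s < 2)
    (k : ℕ) (x : E) :
    ∫⁻ τ in Ioi 0, ENNReal.ofReal (τ ^ k) * BsNorm S T s (S^[k + 1] (T τ x))
      ≤ ENNReal.ofReal (((k + 2) * max C₀ 0) ^ (k + 1) * (k + 2) ^ (1 - s / 2) / (1 - s / 2))
        * BsNorm S T s x := by
  set c : ℝ := k + 2
  have hc : 0 < c := by positivity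
  set A : ℝ := (c * max C₀ 0) ^ (k + 1)
  have hA : 0 ≤ A := by positivity
  have hs' : 0 ≤ (1 - s / 2)⁻¹ := inv_nonneg.2 (by linarith)
  obtain ⟨G, hG, hGeq⟩ : ∃ G : ℝ → ℝ≥0∞, Measurable G ∧
      ∀ σ > 0, G σ = ENNReal.ofReal (σ⁻¹ * ‖S (T (σ / c) x)‖) := by
    refine ⟨(Ioi 0).indicator fun σ => ENNReal.ofReal (σ⁻¹ * ‖S (T (σ / c) x)‖), ?_,
      fun σ hσ => indicator_of_mem hσ _⟩
    rw [← piecewise_eq_indicator]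
    refine ContinuousOn.measurable_piecewise ?_ continuousOn_const measurableSet_Ioi
    refine ENNReal.continuous_ofReal.comp_continuousOn
      ((continuousOn_inv₀.mono fun σ hσ => ne_of_gt hσ).mul ?_)
    exact ((h.continuousOn_S_T x).comp (continuousOn_id.div_const c)
      fun σ hσ => div_pos hσ hc).norm
  calc ∫⁻ τ in Ioi 0, ENNReal.ofReal (τ ^ k) * BsNorm S T s (S^[k + 1] (T τ x))
      = ∫⁻ τ in Ioi 0, ∫⁻ t in Ioi 0,
          ENNReal.ofReal (τ ^ k) * ENNReal.ofReal (t ^ (-s / 2) * ‖S^[k + 2] (T (t + τ) x)‖) := by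
        refine setLIntegral_congr_fun measurableSet_Ioi fun τ (hτ : 0 < τ) => ?_
        rw [BsNorm, ← lintegral_const_mul' _ _ ENNReal.ofReal_ne_top]
        refine setLIntegral_congr_fun measurableSet_Ioi fun t (ht : 0 < t) => ?_
        rw [← h.iterate_S_T_add x (k + 1) ht.le hτ, ← Function.iterate_succ_apply' S]
    _ ≤ ∫⁻ τ in Ioi 0, ∫⁻ t in Ioi 0,
          ENNReal.ofReal A * (ENNReal.ofReal (t ^ (-s / 2)) * G (t + τ)) := by
        refine setLIntegral_mono' measurableSet_Ioi fun τ (hτ : 0 < τ) => ?_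
        refine setLIntegral_mono' measurableSet_Ioi fun t (ht : 0 < t) => ?_
        rw [hGeq _ (add_pos ht hτ), ← ENNReal.ofReal_mul (by positivity),
          ← ENNReal.ofReal_mul (by positivity), ← ENNReal.ofReal_mul hA]
        refine ENNReal.ofReal_le_ofReal ?_
        calc τ ^ k * (t ^ (-s / 2) * ‖S^[k + 2] (T (t + τ) x)‖)
            = t ^ (-s / 2) * (τ ^ k * ‖S^[k + 2] (T (t + τ) x)‖) := mul_left_comm _ _ _
          _ ≤ t ^ (-s / 2) * (A * ((t + τ)⁻¹ * ‖S (T ((t + τ) / c) x)‖)) := by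
            refine mul_le_mul_of_nonneg_left ?_ (by positivity)
            exact h.pow_mul_norm_iterate_S_T_le_s12 x k hτ (le_add_of_nonneg_left ht.le)
          _ = A * (t ^ (-s / 2) * ((t + τ)⁻¹ * ‖S (T ((t + τ) / c) x)‖)) := mul_left_comm _ _ _
    _ = ENNReal.ofReal A * ∫⁻ σ in Ioi 0,
          ENNReal.ofReal (σ ^ (-s / 2 + 1) / (-s / 2 + 1)) * G σ := by
        simp_rw [lintegral_const_mul' _ _ ENNReal.ofReal_ne_top]
        rw [lintegral_Ioi_lintegral_Ioi_rpow_mul_comp_add (by linarith) hG]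
    _ = ENNReal.ofReal A * (ENNReal.ofReal (1 - s / 2)⁻¹ * ∫⁻ σ in Ioi 0,
          ENNReal.ofReal (σ ^ (-s / 2) * ‖S (T (σ / c) x)‖)) := by
        congr 1
        rw [← lintegral_const_mul' _ _ ENNReal.ofReal_ne_top]
        refine setLIntegral_congr_fun measurableSet_Ioi fun σ (hσ : 0 < σ) => ?_
        rw [hGeq σ hσ, ← ENNReal.ofReal_mul (div_nonneg (by positivity) (by linarith)),
          ← ENNReal.ofReal_mul hs',
          Real.rpow_add_one hσ.ne', show -s / 2 + 1 = 1 - s / 2 by ring]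
        congr 1
        field_simp
    _ = ENNReal.ofReal A * (ENNReal.ofReal (1 - s / 2)⁻¹ * (ENNReal.ofReal c *
          (ENNReal.ofReal (c ^ (-s / 2)) * BsNorm S T s x))) := by
        rw [lintegral_Ioi_eq_ofReal_mul_lintegral_Ioi_comp_mul_left hc]
        congr 3
        rw [BsNorm, ← lintegral_const_mul' _ _ ENNReal.ofReal_ne_top]
        refine setLIntegral_congr_fun measurableSet_Ioi fun ρ (hρ : 0 < ρ) => ?_
        rw [mul_div_cancel_left₀ ρ hc.ne', Real.mul_rpow hc.le hρ.le, mul_assoc,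
          ENNReal.ofReal_mul (by positivity)]
    _ = ENNReal.ofReal (A * c ^ (1 - s / 2) / (1 - s / 2)) * BsNorm S T s x := by
        simp only [← mul_assoc]
        rw [← ENNReal.ofReal_mul hA, ← ENNReal.ofReal_mul (by positivity),
          ← ENNReal.ofReal_mul (by positivity), show 1 - s / 2 = -s / 2 + 1 by ring,
          Real.rpow_add_one hc.ne']
        congr 2
        ring

end IsBAS

theorem global_in_time_bound_in_Bs_general (k : ℕ) (s : ℝ) (hs2 : s < 2)
    (M C₀ : ℝ) :
    ∃ C : ℝ≥0, ∀ (D : Set X) (S : X → X) (T : ℝ → X →L[ℝ] X),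
      IsBAS D S T M C₀ → ∀ x ∈ D,
      (∫⁻ τ in Set.Ioi (0 : ℝ),
          BsNorm S T s (τ ^ (k + 1) • S^[k + 1] (T τ x)) * ENNReal.ofReal τ⁻¹)
        ≤ C * BsNorm S T s x ∧
      (∫⁻ τ in Set.Ioi (0 : ℝ), BsNorm S T s (S (T τ x)))
        ≤ C * BsNorm S T s x := by
  let K : ℕ → ℝ := fun j => ((j + 2) * max C₀ 0) ^ (j + 1) * (j + 2) ^ (1 - s / 2) / (1 - s / 2)
  refine ⟨(max (K k) (K 0)).toNNReal, fun D S T h x _ => ⟨?_, ?_⟩⟩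
  · calc ∫⁻ τ in Ioi 0, BsNorm S T s (τ ^ (k + 1) • S^[k + 1] (T τ x)) * ENNReal.ofReal τ⁻¹
        = ∫⁻ τ in Ioi 0, ENNReal.ofReal (τ ^ k) * BsNorm S T s (S^[k + 1] (T τ x)) := by
          refine setLIntegral_congr_fun measurableSet_Ioi fun τ (hτ : 0 < τ) => ?_
          rw [h.bsNorm_smul, abs_of_pos (by positivity), mul_right_comm,
            ← ENNReal.ofReal_mul (by positivity), pow_succ, mul_inv_cancel_right₀ hτ.ne']
      _ ≤ ENNReal.ofReal (K k) * BsNorm S T s x :=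
          h.lintegral_pow_mul_bsNorm_iterate_S_T_le hs2 k x
      _ ≤ ENNReal.ofReal (max (K k) (K 0)) * BsNorm S T s x := by gcongr; exact le_max_left _ _
  · calc ∫⁻ τ in Ioi 0, BsNorm S T s (S (T τ x))
        = ∫⁻ τ in Ioi 0, ENNReal.ofReal (τ ^ 0) * BsNorm S T s (S^[0 + 1] (T τ x)) := by simp
      _ ≤ ENNReal.ofReal (K 0) * BsNorm S T s x :=
          h.lintegral_pow_mul_bsNorm_iterate_S_T_le hs2 0 x
      _ ≤ ENNReal.ofReal (max (K k) (K 0)) * BsNorm S T s x := by gcongr; exact le_max_right _ _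

/-- Integrated smoothing bound in `Ḃˢ`: for every `k ≥ 0` and `s ∈ (0,2)` there is
`C = C(s,k,M,C₀)` with
`∫₀^∞ ‖τ^{k+1}S^{k+1}(T(τ)x)‖_{Ḃˢ} dτ/τ ≤ C‖x‖_{Ḃˢ}` for every `x ∈ D(S)`;
in particular (`k = 0`) `∫₀^∞ ‖S(T(τ)x)‖_{Ḃˢ} dτ ≤ C‖x‖_{Ḃˢ}`. -/
theorem global_in_time_bound_in_Bs (k : ℕ) (s : ℝ) (hs0 : 0 < s) (hs2 : s < 2)
    (M C₀ : ℝ) :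
    ∃ C : ℝ≥0, ∀ (D : Set X) (S : X → X) (T : ℝ → X →L[ℝ] X),
      IsBAS D S T M C₀ → ∀ x ∈ D,
      (∫⁻ τ in Set.Ioi (0 : ℝ),
          BsNorm S T s (τ ^ (k + 1) • S^[k + 1] (T τ x)) * ENNReal.ofReal τ⁻¹)
        ≤ C * BsNorm S T s x ∧
      (∫⁻ τ in Set.Ioi (0 : ℝ), BsNorm S T s (S (T τ x)))
        ≤ C * BsNorm S T s x :=
  global_in_time_bound_in_Bs_general k s hs2 M C₀
end
end

section
/- Let (X,‖·‖) be a real Banach space and let S, with domain D(S) ⊆ X, generate a bounded analytic semigroup (T(t))_{t≥0} with constants M, C₀ as in the context. Then for every integer k ≥ 0 and every s ∈ (0,2) there exists a constant C = C(s,k,M,C₀) such that for every x in the range of S: ∫₀^∞ ‖τ^{k+1}S^{k+1}(T(τ)x)‖_{Ḃ⁻ˢ} dτ/τ ≤ C‖x‖_{Ḃ⁻ˢ}. In particular (k = 0): ∫₀^∞ ‖S(T(τ)x)‖_{Ḃ⁻ˢ} dτ ≤ C‖x‖_{Ḃ⁻ˢ}. -/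
open MeasureTheory
open scoped ENNReal NNReal

noncomputable section

variable {X : Type*} [NormedAddCommGroup X] [NormedSpace ℝ X] [CompleteSpace X]

/-! Since `T(t) S^{k+1} T(τ) x = S^{k+1} T((t+τ)/2) T((t+τ)/2) x`, analyticity gives
`τ^k ‖T(t) S^{k+1} T(τ) x‖ ≲ ‖T((t+τ)/2) x‖ / (t+τ)`. Integrating against `t^{s/2-1} dt dτ`
and substituting `v = t + τ`, the inner integral `∫₀^v t^{s/2-1} dt = (2/s) v^{s/2}` leaves
`(2/s) ∫₀^∞ v^{s/2-1} ‖T(v/2) x‖ dv = (2/s) 2^{s/2} ‖x‖_{Ḃ⁻ˢ}`. -/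

open Set

theorem setLIntegral_Ioi_comp_add (t : ℝ) (F : ℝ → ℝ≥0∞) :
    ∫⁻ τ in Ioi 0, F (t + τ) = ∫⁻ v in Ioi t, F v := by
  have h := (measurePreserving_add_left volume t).setLIntegral_comp_preimage_emb
    (Homeomorph.addLeft t).measurableEmbedding F (Ioi t)
  rwa [show (t + ·) ⁻¹' Ioi t = Ioi 0 by ext; simp] at h

theorem setLIntegral_Ioi_comp_mul_left {c : ℝ} (hc : 0 < c) (h : ℝ → ℝ≥0∞) :
    ∫⁻ u in Ioi 0, h (c * u) = ENNReal.ofReal c⁻¹ * ∫⁻ v in Ioi 0, h v := by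
  have hmap := Real.map_volume_mul_left hc.ne'
  rw [← lintegral_indicator measurableSet_Ioi, ← lintegral_indicator measurableSet_Ioi,
    ← abs_of_pos (inv_pos.mpr hc), ← smul_eq_mul, ← lintegral_smul_measure, ← hmap,
    (measurableEmbedding_mulLeft₀ hc.ne').lintegral_map]
  congr 1 with u
  simp [indicator, mul_pos_iff_of_pos_left hc]

theorem lintegral_Ioo_rpow_sub_one {a v : ℝ} (ha : 0 < a) (hv : 0 < v) :
    ∫⁻ t in Ioo 0 v, ENNReal.ofReal (t ^ (a - 1)) = ENNReal.ofReal (v ^ a / a) := by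
  have hint : IntegrableOn (fun t : ℝ => t ^ (a - 1)) (Ioc 0 v) := by
    rw [← intervalIntegrable_iff_integrableOn_Ioc_of_le hv.le]
    exact intervalIntegral.intervalIntegrable_rpow' (by linarith)
  rw [setLIntegral_congr Ioo_ae_eq_Ioc, ← ofReal_integral_eq_lintegral_ofReal hint
    ((ae_restrict_mem measurableSet_Ioc).mono fun t ht => Real.rpow_nonneg ht.1.le _),
    ← intervalIntegral.integral_of_le hv.le, integral_rpow (Or.inl (by linarith))]
  simp [Real.zero_rpow ha.ne']

theorem lintegral_Ioi_lintegral_Ioi_mul_comp_add {f g : ℝ → ℝ≥0∞} (hf : Measurable f)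
    (hg : Measurable g) :
    ∫⁻ τ in Ioi 0, ∫⁻ t in Ioi 0, f t * g (t + τ) =
      ∫⁻ v in Ioi 0, (∫⁻ t in Ioo 0 v, f t) * g v := by
  have hlt : Measurable ({p : ℝ × ℝ | p.1 < p.2}.indicator fun p => f p.1 * g p.2) :=
    ((hf.comp measurable_fst).mul (hg.comp measurable_snd)).indicator
      (measurableSet_lt measurable_fst measurable_snd)
  calc ∫⁻ τ in Ioi 0, ∫⁻ t in Ioi 0, f t * g (t + τ)
      = ∫⁻ t in Ioi 0, ∫⁻ τ in Ioi 0, f t * g (t + τ) :=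
        lintegral_lintegral_swap ((hf.comp measurable_snd).mul
          (hg.comp (measurable_snd.add measurable_fst))).aemeasurable
    _ = ∫⁻ t in Ioi 0, ∫⁻ v in Ioi 0, (Ioi t).indicator (fun v => f t * g v) v := by
        refine setLIntegral_congr_fun measurableSet_Ioi fun t ht => ?_
        rw [setLIntegral_Ioi_comp_add t (fun v => f t * g v),
          lintegral_indicator measurableSet_Ioi, Measure.restrict_restrict measurableSet_Ioi,
          inter_eq_left.mpr (Ioi_subset_Ioi (le_of_lt ht))]
    _ = ∫⁻ v in Ioi 0, ∫⁻ t in Ioi 0, (Iio v).indicator (fun t => f t * g v) t :=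
        lintegral_lintegral_swap hlt.aemeasurable
    _ = ∫⁻ v in Ioi 0, (∫⁻ t in Ioo 0 v, f t) * g v := by
        congr 1 with v
        rw [lintegral_indicator measurableSet_Iio, Measure.restrict_restrict measurableSet_Iio,
          Iio_inter_Ioi, lintegral_mul_const _ hf]

theorem BnegNorm_smul {E : Type*} [NormedAddCommGroup E] [NormedSpace ℝ E] (T : ℝ → E →L[ℝ] E)
    (s c : ℝ) (y : E) : BnegNorm T s (c • y) = ENNReal.ofReal |c| * BnegNorm T s y := by
  rw [BnegNorm, BnegNorm, ← lintegral_const_mul' _ _ ENNReal.ofReal_ne_top]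
  refine setLIntegral_congr_fun measurableSet_Ioi fun t _ => ?_
  rw [map_smul, norm_smul, Real.norm_eq_abs, ← ENNReal.ofReal_mul (abs_nonneg c)]
  ring_nf

def smoothingConst (M C₀ : ℝ) : ℕ → ℝ
  | 0 => |M|
  | n + 1 => 2 ^ (n + 1) * |C₀| * smoothingConst M C₀ n

theorem smoothingConst_nonneg (M C₀ : ℝ) (m : ℕ) : 0 ≤ smoothingConst M C₀ m := by
  induction m with
  | zero => exact abs_nonneg M
  | succ n ih => unfold smoothingConst; positivity

namespace IsBAS

variable {E : Type*} [NormedAddCommGroup E] [NormedSpace ℝ E]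
  {D : Set E} {S : E → E} {T : ℝ → E →L[ℝ] E} {M C₀ : ℝ}

theorem apply_add (hT : IsBAS D S T M C₀) {t u : ℝ} (ht : 0 ≤ t) (hu : 0 ≤ u) (z : E) :
    T (t + u) z = T t (T u z) := by
  rw [hT.T_semigroup t ht u hu, ContinuousLinearMap.comp_apply]

theorem S_apply_add (hT : IsBAS D S T M C₀) {t u : ℝ} (ht : 0 ≤ t) (hu : 0 < u) (z : E) :
    S (T (t + u) z) = T t (S (T u z)) := by
  rw [hT.apply_add ht hu.le, hT.T_comm _ (hT.analytic_mem z u hu) t ht]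

theorem iterate_S_apply_add (hT : IsBAS D S T M C₀) (m : ℕ) {t u : ℝ} (ht : 0 ≤ t)
    (hu : 0 < u) (z : E) : S^[m] (T (t + u) z) = T t (S^[m] (T u z)) := by
  induction m generalizing z u with
  | zero => exact hT.apply_add ht hu.le z
  | succ m ih =>
    have hu2 : 0 < u / 2 := half_pos hu
    have hS : S (T u z) = T (u / 2) (S (T (u / 2) z)) := by
      rw [← hT.S_apply_add hu2.le hu2, add_halves]
    rw [Function.iterate_succ_apply, Function.iterate_succ_apply, hS, ← ih hu2,
      ← hT.S_apply_add (by positivity) hu2, add_assoc, add_halves]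

theorem norm_S_apply_le (hT : IsBAS D S T M C₀) {u : ℝ} (hu : 0 < u) (z : E) :
    ‖S (T u z)‖ ≤ |C₀| * ‖z‖ / u := by
  rw [le_div_iff₀ hu, mul_comm]
  exact (hT.analytic_bdd z u hu).trans (by gcongr; exact le_abs_self C₀)

theorem norm_iterate_S_le (hT : IsBAS D S T M C₀) (m : ℕ) {u : ℝ} (hu : 0 < u) (z : E) :
    ‖S^[m] (T u z)‖ ≤ smoothingConst M C₀ m * ‖z‖ / u ^ m := by
  induction m generalizing u z with
  | zero => simpa using (hT.T_bdd u hu.le z).trans (by gcongr; exact le_abs_self M)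
  | succ n ih =>
    have hu2 : 0 < u / 2 := half_pos hu
    have hB := smoothingConst_nonneg M C₀ n
    calc ‖S^[n + 1] (T u z)‖ = ‖S^[n] (T (u / 2) (S (T (u / 2) z)))‖ := by
          rw [Function.iterate_succ_apply, ← hT.S_apply_add hu2.le hu2, add_halves]
      _ ≤ smoothingConst M C₀ n * ‖S (T (u / 2) z)‖ / (u / 2) ^ n := ih hu2 _
      _ ≤ smoothingConst M C₀ n * (|C₀| * ‖z‖ / (u / 2)) / (u / 2) ^ n := by
          gcongr; exact hT.norm_S_apply_le hu2 z
      _ = smoothingConst M C₀ (n + 1) * ‖z‖ / u ^ (n + 1) := by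
          simp only [smoothingConst, div_pow]; field_simp; ring

theorem norm_iterate_S_le_half (hT : IsBAS D S T M C₀) (m : ℕ) {v : ℝ} (hv : 0 < v) (z : E) :
    ‖S^[m] (T v z)‖ ≤ 2 ^ m * smoothingConst M C₀ m * ‖T (v / 2) z‖ / v ^ m := by
  have hv2 : 0 < v / 2 := half_pos hv
  calc ‖S^[m] (T v z)‖ = ‖S^[m] (T (v / 2) (T (v / 2) z))‖ := by
        rw [← hT.apply_add hv2.le hv2.le, add_halves]
    _ ≤ smoothingConst M C₀ m * ‖T (v / 2) z‖ / (v / 2) ^ m := hT.norm_iterate_S_le m hv2 _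
    _ = 2 ^ m * smoothingConst M C₀ m * ‖T (v / 2) z‖ / v ^ m := by
        rw [div_pow]; field_simp

theorem pow_mul_norm_apply_iterate_S_le (hT : IsBAS D S T M C₀) (k : ℕ) {t τ : ℝ} (ht : 0 ≤ t)
    (hτ : 0 < τ) (x : E) :
    τ ^ k * ‖T t (S^[k + 1] (T τ x))‖ ≤
      2 ^ (k + 1) * smoothingConst M C₀ (k + 1) * (‖T ((t + τ) / 2) x‖ / (t + τ)) := by
  have hv : 0 < t + τ := by positivity
  rw [← hT.iterate_S_apply_add _ ht hτ]
  calc τ ^ k * ‖S^[k + 1] (T (t + τ) x)‖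
      ≤ (t + τ) ^ k * (2 ^ (k + 1) * smoothingConst M C₀ (k + 1) * ‖T ((t + τ) / 2) x‖ /
          (t + τ) ^ (k + 1)) := by
        gcongr
        · linarith
        · exact hT.norm_iterate_S_le_half (k + 1) hv x
    _ = _ := by field_simp; ring

theorem measurable_indicator_norm_apply_half_div (hT : IsBAS D S T M C₀) (x : E) :
    Measurable ((Ioi (0 : ℝ)).indicator fun v => ENNReal.ofReal (‖T (v / 2) x‖ / v)) := by
  classical
  rw [← piecewise_eq_indicator]
  refine ContinuousOn.measurable_piecewise ?_ continuousOn_const measurableSet_Ioi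
  refine ENNReal.continuous_ofReal.comp_continuousOn (ContinuousOn.div ?_ continuousOn_id
    fun v hv => (mem_Ioi.mp hv).ne')
  exact ((hT.T_cont x).comp (continuous_id.div_const 2).continuousOn
    fun v hv => mem_Ici.mpr (half_pos (mem_Ioi.mp hv)).le).norm

theorem ofReal_pow_mul_BnegNorm_iterate_le (hT : IsBAS D S T M C₀) (k : ℕ) (s : ℝ) {τ : ℝ}
    (hτ : 0 < τ) (x : E) :
    ENNReal.ofReal (τ ^ k) * BnegNorm T s (S^[k + 1] (T τ x)) ≤
      ∫⁻ t in Ioi 0, ENNReal.ofReal (2 ^ (k + 1) * smoothingConst M C₀ (k + 1)) *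
        (ENNReal.ofReal (t ^ (s / 2 - 1)) *
          (Ioi 0).indicator (fun v => ENNReal.ofReal (‖T (v / 2) x‖ / v)) (t + τ)) := by
  have hK : 0 ≤ 2 ^ (k + 1) * smoothingConst M C₀ (k + 1) :=
    mul_nonneg (by positivity) (smoothingConst_nonneg M C₀ (k + 1))
  rw [BnegNorm, ← lintegral_const_mul' _ _ ENNReal.ofReal_ne_top]
  refine setLIntegral_mono' measurableSet_Ioi fun t (ht : 0 < t) => ?_
  rw [indicator_of_mem (mem_Ioi.mpr (add_pos ht hτ)),
    ← ENNReal.ofReal_mul (Real.rpow_nonneg ht.le _), ← ENNReal.ofReal_mul hK,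
    ← ENNReal.ofReal_mul (by positivity)]
  refine ENNReal.ofReal_le_ofReal ?_
  calc τ ^ k * (t ^ (s / 2 - 1) * ‖T t (S^[k + 1] (T τ x))‖)
      = t ^ (s / 2 - 1) * (τ ^ k * ‖T t (S^[k + 1] (T τ x))‖) := by ring
    _ ≤ t ^ (s / 2 - 1) *
        (2 ^ (k + 1) * smoothingConst M C₀ (k + 1) * (‖T ((t + τ) / 2) x‖ / (t + τ))) :=
      mul_le_mul_of_nonneg_left (hT.pow_mul_norm_apply_iterate_S_le k ht.le hτ x)
        (Real.rpow_nonneg ht.le _)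
    _ = _ := by ring

theorem lintegral_pow_mul_BnegNorm_iterate_le (hT : IsBAS D S T M C₀) (k : ℕ) {s : ℝ}
    (hs : 0 < s) (x : E) :
    ∫⁻ τ in Ioi 0, ENNReal.ofReal (τ ^ k) * BnegNorm T s (S^[k + 1] (T τ x)) ≤
      ENNReal.ofReal (2 ^ (k + 1) * smoothingConst M C₀ (k + 1) * (2 / s * 2 ^ (s / 2))) *
        BnegNorm T s x := by
  set K := 2 ^ (k + 1) * smoothingConst M C₀ (k + 1)
  have hK : 0 ≤ K := mul_nonneg (by positivity) (smoothingConst_nonneg M C₀ (k + 1))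
  set f : ℝ → ℝ≥0∞ := fun t => ENNReal.ofReal (t ^ (s / 2 - 1))
  -- `T` is arbitrary at negative times; the indicator makes `g` measurable.
  set g := (Ioi (0 : ℝ)).indicator fun v => ENNReal.ofReal (‖T (v / 2) x‖ / v) with hg
  have hf : Measurable f := (measurable_id.pow_const _).ennreal_ofReal
  have hscale : ∀ v ∈ Ioi (0 : ℝ), (∫⁻ t in Ioo 0 v, f t) * g v =
      ENNReal.ofReal (2 / s * 2 ^ (s / 2 - 1)) *
        ENNReal.ofReal ((2⁻¹ * v) ^ (s / 2 - 1) * ‖T (2⁻¹ * v) x‖) := by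
    intro v (hv : 0 < v)
    rw [lintegral_Ioo_rpow_sub_one (half_pos hs) hv, hg, indicator_of_mem (mem_Ioi.mpr hv),
      ← ENNReal.ofReal_mul (by positivity), ← ENNReal.ofReal_mul (by positivity)]
    congr 1
    rw [Real.mul_rpow (by norm_num) (le_of_lt hv), Real.rpow_sub_one (ne_of_gt hv),
      Real.inv_rpow (by norm_num)]
    field_simp
  calc ∫⁻ τ in Ioi 0, ENNReal.ofReal (τ ^ k) * BnegNorm T s (S^[k + 1] (T τ x))
      ≤ ∫⁻ τ in Ioi 0, ∫⁻ t in Ioi 0, ENNReal.ofReal K * (f t * g (t + τ)) :=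
        setLIntegral_mono' measurableSet_Ioi fun τ hτ =>
          hT.ofReal_pow_mul_BnegNorm_iterate_le k s hτ x
    _ = ENNReal.ofReal K * ∫⁻ v in Ioi 0, (∫⁻ t in Ioo 0 v, f t) * g v := by
        simp_rw [lintegral_const_mul' _ _ ENNReal.ofReal_ne_top]
        rw [lintegral_Ioi_lintegral_Ioi_mul_comp_add hf
          (hT.measurable_indicator_norm_apply_half_div x)]
    _ = ENNReal.ofReal K * (ENNReal.ofReal (2 / s * 2 ^ (s / 2 - 1)) *
          (ENNReal.ofReal 2 * BnegNorm T s x)) := by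
        rw [setLIntegral_congr_fun measurableSet_Ioi hscale, lintegral_const_mul' _ _
          ENNReal.ofReal_ne_top, setLIntegral_Ioi_comp_mul_left (by norm_num : (0 : ℝ) < 2⁻¹)
          (fun u => ENNReal.ofReal (u ^ (s / 2 - 1) * ‖T u x‖)), inv_inv, BnegNorm]
    _ = _ := by
        have h2 : 2 / s * 2 ^ (s / 2) = 2 / s * 2 ^ (s / 2 - 1) * 2 := by
          rw [Real.rpow_sub_one two_ne_zero]; field_simp
        rw [h2, ← mul_assoc (ENNReal.ofReal (2 / s * 2 ^ (s / 2 - 1))),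
          ← ENNReal.ofReal_mul (by positivity), ← mul_assoc, ← ENNReal.ofReal_mul hK]

end IsBAS

theorem global_in_time_bound_in_Bneg_general (k : ℕ) (s : ℝ) (hs0 : 0 < s)
    (M C₀ : ℝ) :
    ∃ C : ℝ≥0, ∀ (D : Set X) (S : X → X) (T : ℝ → X →L[ℝ] X),
      IsBAS D S T M C₀ → ∀ x ∈ S '' D,
      (∫⁻ τ in Set.Ioi (0 : ℝ),
          BnegNorm T s (τ ^ (k + 1) • S^[k + 1] (T τ x)) * ENNReal.ofReal τ⁻¹)
        ≤ C * BnegNorm T s x ∧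
      (∫⁻ τ in Set.Ioi (0 : ℝ), BnegNorm T s (S (T τ x)))
        ≤ C * BnegNorm T s x := by
  set K : ℕ → ℝ≥0 := fun j =>
    (2 ^ (j + 1) * smoothingConst M C₀ (j + 1) * (2 / s * 2 ^ (s / 2))).toNNReal
  refine ⟨K k + K 0, fun D S T hT x _ => ⟨?_, ?_⟩⟩
  · calc ∫⁻ τ in Ioi 0, BnegNorm T s (τ ^ (k + 1) • S^[k + 1] (T τ x)) * ENNReal.ofReal τ⁻¹
        = ∫⁻ τ in Ioi 0, ENNReal.ofReal (τ ^ k) * BnegNorm T s (S^[k + 1] (T τ x)) := by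
          refine setLIntegral_congr_fun measurableSet_Ioi fun τ (hτ : 0 < τ) => ?_
          rw [BnegNorm_smul, abs_of_pos (pow_pos hτ _), mul_right_comm,
            ← ENNReal.ofReal_mul (by positivity), pow_succ, mul_inv_cancel_right₀ hτ.ne']
      _ ≤ K k * BnegNorm T s x := hT.lintegral_pow_mul_BnegNorm_iterate_le k hs0 x
      _ ≤ (K k + K 0) * BnegNorm T s x := by gcongr; exact le_self_add
  · calc ∫⁻ τ in Ioi 0, BnegNorm T s (S (T τ x))
        = ∫⁻ τ in Ioi 0, ENNReal.ofReal (τ ^ 0) * BnegNorm T s (S^[0 + 1] (T τ x)) := by simp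
      _ ≤ K 0 * BnegNorm T s x := hT.lintegral_pow_mul_BnegNorm_iterate_le 0 hs0 x
      _ ≤ (K k + K 0) * BnegNorm T s x := by gcongr; exact le_add_self

/-- Integrated smoothing bound in `Ḃ⁻ˢ`: for every `k ≥ 0` and `s ∈ (0,2)` there is
`C = C(s,k,M,C₀)` with
`∫₀^∞ ‖τ^{k+1}S^{k+1}(T(τ)x)‖_{Ḃ⁻ˢ} dτ/τ ≤ C‖x‖_{Ḃ⁻ˢ}` for every `x` in the range
of `S`; in particular (`k = 0`) `∫₀^∞ ‖S(T(τ)x)‖_{Ḃ⁻ˢ} dτ ≤ C‖x‖_{Ḃ⁻ˢ}`. -/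
theorem global_in_time_bound_in_Bneg (k : ℕ) (s : ℝ) (hs0 : 0 < s) (hs2 : s < 2)
    (M C₀ : ℝ) :
    ∃ C : ℝ≥0, ∀ (D : Set X) (S : X → X) (T : ℝ → X →L[ℝ] X),
      IsBAS D S T M C₀ → ∀ x ∈ S '' D,
      (∫⁻ τ in Set.Ioi (0 : ℝ),
          BnegNorm T s (τ ^ (k + 1) • S^[k + 1] (T τ x)) * ENNReal.ofReal τ⁻¹)
        ≤ C * BnegNorm T s x ∧
      (∫⁻ τ in Set.Ioi (0 : ℝ), BnegNorm T s (S (T τ x)))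
        ≤ C * BnegNorm T s x :=
  global_in_time_bound_in_Bneg_general k s hs0 M C₀
end
end
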